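/- arXiv:2405.08594 — 4 statements merged into one kernel-verified Lean document; each statement's English description precedes it below -/
import Mathlib

section
/- For all ψ0, ψ1 ∈ ℓ²(ℕ, ℂ) with coefficients c_{0n} = ψ0(n), c_{1n} = ψ1(n), the purity of the reduced bosonic density matrix equals the purity of the reduced fermionic density matrix: ‖ψ0‖⁴ + ‖ψ1‖⁴ + 2·|⟨ψ0,ψ1⟩|² = Σ_{n≥0} Σ_{m≥0} |c_{0n}·conj(c_{0m}) + c_{1n}·conj(c_{1m})|², where the right-hand side is a convergent (summable) double series. -/
open scoped InnerProductSpace ComplexConjugate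

noncomputable section
set_option maxHeartbeats 1600000

/-- The Hilbert space `ℓ²(ℕ, ℂ)` of square-summable complex sequences. -/
abbrev H : Type := lp (fun _ : ℕ => ℂ) 2

lemma aux_summable_sq (f : H) : Summable (fun n => ‖f n‖ ^ 2) := by
  have h := lp.summable_inner (𝕜 := ℂ) f f
  have h' := (Complex.hasSum_iff _ _).mp h.hasSum
  refine h'.1.summable.congr fun n => ?_
  exact inner_self_eq_norm_sq (𝕜 := ℂ) (f n)

lemma aux_norm_sq (f : H) : ‖f‖ ^ 2 = ∑' n, ‖f n‖ ^ 2 := by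
  rw [← inner_self_eq_norm_sq (𝕜 := ℂ) f, lp.inner_eq_tsum]
  show (∑' i, ⟪f i, f i⟫_ℂ).re = _
  rw [Complex.re_tsum (lp.summable_inner (𝕜 := ℂ) f f)]
  exact tsum_congr fun n => inner_self_eq_norm_sq (𝕜 := ℂ) (f n)

/-- The purity of the reduced bosonic density matrix of the fermion–boson state
`(ψ0, ψ1)` equals the purity of the reduced fermionic density matrix:
`‖ψ0‖⁴ + ‖ψ1‖⁴ + 2·|⟨ψ0,ψ1⟩|² = Σ_{n,m} |c_{0n}·conj(c_{0m}) + c_{1n}·conj(c_{1m})|²`,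
where `c_{in} = ψ_i(n)` and the double series on the right is summable. -/
theorem purity_bosonic_eq_purity_fermionic (ψ0 ψ1 : H) :
    Summable (fun p : ℕ × ℕ =>
      ‖ψ0 p.1 * conj (ψ0 p.2) + ψ1 p.1 * conj (ψ1 p.2)‖ ^ 2) ∧
    ‖ψ0‖ ^ 4 + ‖ψ1‖ ^ 4 + 2 * ‖(⟪ψ0, ψ1⟫_ℂ : ℂ)‖ ^ 2 =
      ∑' p : ℕ × ℕ, ‖ψ0 p.1 * conj (ψ0 p.2) + ψ1 p.1 * conj (ψ1 p.2)‖ ^ 2 := by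
  -- abbreviations
  set u : ℕ → ℂ := fun n => ψ0 n * conj (ψ1 n) with hu
  set v : ℕ → ℂ := fun n => conj (ψ0 n) * ψ1 n with hv
  have h0 := aux_summable_sq ψ0
  have h1 := aux_summable_sq ψ1
  -- summability of u and v
  have husum : Summable u := by
    refine (lp.summable_inner (𝕜 := ℂ) ψ1 ψ0).congr fun n => ?_
    simp [RCLike.inner_apply, hu, mul_comm]
  have hvsum : Summable v := by
    refine (lp.summable_inner (𝕜 := ℂ) ψ0 ψ1).congr fun n => ?_
    simp [RCLike.inner_apply, hv, mul_comm]
  have huv : Summable (fun p : ℕ × ℕ => u p.1 * v p.2) :=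
    summable_mul_of_summable_norm (summable_norm_iff.mpr husum) (summable_norm_iff.mpr hvsum)
  have huvre : Summable (fun p : ℕ × ℕ => (u p.1 * v p.2).re) :=
    ((Complex.hasSum_iff _ _).mp huv.hasSum).1.summable
  -- the three pieces
  have ha : Summable (fun p : ℕ × ℕ => ‖ψ0 p.1‖ ^ 2 * ‖ψ0 p.2‖ ^ 2) :=
    h0.mul_of_nonneg h0 (fun _ => sq_nonneg _) fun _ => sq_nonneg _
  have hb : Summable (fun p : ℕ × ℕ => ‖ψ1 p.1‖ ^ 2 * ‖ψ1 p.2‖ ^ 2) :=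
    h1.mul_of_nonneg h1 (fun _ => sq_nonneg _) fun _ => sq_nonneg _
  -- pointwise identity
  have hpt : ∀ p : ℕ × ℕ,
      ‖ψ0 p.1 * conj (ψ0 p.2) + ψ1 p.1 * conj (ψ1 p.2)‖ ^ 2 =
        ‖ψ0 p.1‖ ^ 2 * ‖ψ0 p.2‖ ^ 2 + ‖ψ1 p.1‖ ^ 2 * ‖ψ1 p.2‖ ^ 2 +
          2 * (u p.1 * v p.2).re := by
    intro p
    simp only [hu, hv, Complex.sq_norm, Complex.normSq_apply,
      Complex.add_re, Complex.add_im, Complex.mul_re, Complex.mul_im,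
      Complex.conj_re, Complex.conj_im]
    ring
  have hsum : Summable (fun p : ℕ × ℕ =>
      ‖ψ0 p.1 * conj (ψ0 p.2) + ψ1 p.1 * conj (ψ1 p.2)‖ ^ 2) := by
    refine ((ha.add hb).add (huvre.mul_left 2)).congr fun p => (hpt p).symm
  refine ⟨hsum, ?_⟩
  symm
  calc ∑' p : ℕ × ℕ, ‖ψ0 p.1 * conj (ψ0 p.2) + ψ1 p.1 * conj (ψ1 p.2)‖ ^ 2
      = ∑' p : ℕ × ℕ, (‖ψ0 p.1‖ ^ 2 * ‖ψ0 p.2‖ ^ 2 + ‖ψ1 p.1‖ ^ 2 * ‖ψ1 p.2‖ ^ 2 +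
          2 * (u p.1 * v p.2).re) := tsum_congr hpt
    _ = (∑' p : ℕ × ℕ, ‖ψ0 p.1‖ ^ 2 * ‖ψ0 p.2‖ ^ 2) +
        (∑' p : ℕ × ℕ, ‖ψ1 p.1‖ ^ 2 * ‖ψ1 p.2‖ ^ 2) +
        ∑' p : ℕ × ℕ, 2 * (u p.1 * v p.2).re := by
        rw [Summable.tsum_add (ha.add hb) (huvre.mul_left 2), Summable.tsum_add ha hb]
    _ = ‖ψ0‖ ^ 4 + ‖ψ1‖ ^ 4 + 2 * ‖(⟪ψ0, ψ1⟫_ℂ : ℂ)‖ ^ 2 := by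
        have e0 : (∑' p : ℕ × ℕ, ‖ψ0 p.1‖ ^ 2 * ‖ψ0 p.2‖ ^ 2) = ‖ψ0‖ ^ 4 := by
          rw [← tsum_mul_tsum_of_summable_norm
            (h0.congr fun n => (Real.norm_of_nonneg (sq_nonneg _)).symm)
            (h0.congr fun n => (Real.norm_of_nonneg (sq_nonneg _)).symm),
            ← aux_norm_sq]
          ring
        have e1 : (∑' p : ℕ × ℕ, ‖ψ1 p.1‖ ^ 2 * ‖ψ1 p.2‖ ^ 2) = ‖ψ1‖ ^ 4 := by
          rw [← tsum_mul_tsum_of_summable_norm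
            (h1.congr fun n => (Real.norm_of_nonneg (sq_nonneg _)).symm)
            (h1.congr fun n => (Real.norm_of_nonneg (sq_nonneg _)).symm),
            ← aux_norm_sq]
          ring
        have hU : (∑' n, u n) = conj (⟪ψ0, ψ1⟫_ℂ : ℂ) := by
          rw [lp.inner_eq_tsum, ← Complex.star_def, tsum_star]
          refine tsum_congr fun n => ?_
          simp [RCLike.inner_apply, hu, mul_comm]
        have hV : (∑' n, v n) = (⟪ψ0, ψ1⟫_ℂ : ℂ) := by
          rw [lp.inner_eq_tsum]
          exact tsum_congr fun n => by simp [RCLike.inner_apply, hv, mul_comm]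
        have hmul : (∑' n, u n) * (∑' n, v n) = ∑' p : ℕ × ℕ, u p.1 * v p.2 :=
          tsum_mul_tsum_of_summable_norm (summable_norm_iff.mpr husum)
            (summable_norm_iff.mpr hvsum)
        have e2 : (∑' p : ℕ × ℕ, 2 * (u p.1 * v p.2).re) = 2 * ‖(⟪ψ0, ψ1⟫_ℂ : ℂ)‖ ^ 2 := by
          rw [tsum_mul_left, ← Complex.re_tsum huv, ← hmul, hU, hV]
          congr 1
          rw [mul_comm, Complex.mul_conj]
          simp [Complex.sq_norm]
        rw [e0, e1, e2]
end
end

section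
/- For every α ∈ ℂ, the Bell super-coherent states |α,L±⟩ = ((1/√2)·ψ1^α, ±(1/√2)·ψ0^α) and |α,B±⟩ = ((1/√2)·ψ0^α, ±(1/√2)·ψ1^α) satisfy: (i) the eigenvalue equations A_1|α,L−⟩ = α·|α,L−⟩, A_{−1}|α,L+⟩ = α·|α,L+⟩, Aᵀ_1|α,B−⟩ = α·|α,B−⟩, Aᵀ_{−1}|α,B+⟩ = α·|α,B+⟩; (ii) each of the four states is a unit vector, ⟨α,L+|α,L−⟩ = 0 and ⟨α,B+|α,B−⟩ = 0; (iii) each of the four states has concurrence 1. -/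
open scoped InnerProductSpace ComplexConjugate

noncomputable section

/-- The componentwise-sum inner product on fermion–boson states in `H × H`. -/
noncomputable def pinner (Φ Ψ : H × H) : ℂ := ⟪Φ.1, Ψ.1⟫_ℂ + ⟪Φ.2, Ψ.2⟫_ℂ

/-- The concurrence of a fermion–boson state `Ψ = (ψ0, ψ1) ∈ H × H`. -/
noncomputable def concurrence (Ψ : H × H) : ℝ :=
  2 * Real.sqrt (‖Ψ.1‖ ^ 2 * ‖Ψ.2‖ ^ 2 - ‖(⟪Ψ.1, Ψ.2⟫_ℂ : ℂ)‖ ^ 2)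

/-- The bosonic annihilation operator on sequences: `(aψ)(n) = √(n+1)·ψ(n+1)`. -/
noncomputable def aOp (ψ : ℕ → ℂ) : ℕ → ℂ := fun n => (Real.sqrt (n + 1) : ℂ) * ψ (n + 1)

/-- The super-annihilation operator `A_ε (ψ0, ψ1) = (aψ0 + ε·ψ1, aψ1)` (for `ε = ±1`). -/
noncomputable def A (ε : ℂ) (Ψ : (ℕ → ℂ) × (ℕ → ℂ)) : (ℕ → ℂ) × (ℕ → ℂ) :=
  (aOp Ψ.1 + ε • Ψ.2, aOp Ψ.2)

/-- The super-annihilation operator `Aᵀ_ε (ψ0, ψ1) = (aψ0, ε·ψ0 + aψ1)` (for `ε = ±1`). -/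
noncomputable def AT (ε : ℂ) (Ψ : (ℕ → ℂ) × (ℕ → ℂ)) : (ℕ → ℂ) × (ℕ → ℂ) :=
  (aOp Ψ.1, ε • Ψ.1 + aOp Ψ.2)

/-- The displaced Fock state `ψ0^α = D(α)|0⟩` as a coefficient sequence. -/
noncomputable def psi0 (α : ℂ) : ℕ → ℂ := fun n =>
  Complex.exp (-(‖α‖ ^ 2 : ℝ) / 2) * α ^ n / Real.sqrt n.factorial

/-- The displaced Fock state `ψ1^α = D(α)|1⟩` as a coefficient sequence. -/
noncomputable def psi1 (α : ℂ) : ℕ → ℂ := fun n =>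
  if n = 0 then -conj α * Complex.exp (-(‖α‖ ^ 2 : ℝ) / 2)
  else Complex.exp (-(‖α‖ ^ 2 : ℝ) / 2) * α ^ (n - 1) * ((n : ℂ) - (‖α‖ ^ 2 : ℝ)) /
    Real.sqrt n.factorial

/-! ### Auxiliary series lemmas -/

lemma sumB (t : ℝ) : ∑' n : ℕ, t ^ n / n.factorial = Real.exp t := by
  rw [Real.exp_eq_exp_ℝ, NormedSpace.exp_eq_tsum_div]

lemma sumB_summable (t : ℝ) : Summable (fun n : ℕ => t ^ n / n.factorial) :=
  Real.summable_pow_div_factorial t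

lemma sumShift_summable (t : ℝ) :
    Summable (fun n : ℕ => t ^ (n + 1) / (n + 1).factorial) :=
  ((summable_nat_add_iff 1).mpr (sumB_summable t))

lemma sumShift (t : ℝ) :
    ∑' n : ℕ, t ^ (n + 1) / (n + 1).factorial = Real.exp t - 1 := by
  have h := Summable.tsum_eq_zero_add (sumB_summable t)
  rw [sumB t] at h
  simp only [pow_zero, Nat.factorial_zero, Nat.cast_one] at h
  linarith [h]

lemma keyM (t : ℝ) (n : ℕ) :
    ((n : ℝ) + 1) * t ^ (n + 1) / (n + 1).factorial = t * (t ^ n / n.factorial) := by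
  rw [Nat.factorial_succ]
  have h1 : (n.factorial : ℝ) ≠ 0 := Nat.cast_ne_zero.mpr n.factorial_ne_zero
  have h2 : ((n : ℝ) + 1) ≠ 0 := by positivity
  push_cast
  field_simp
  ring

lemma sumM_summable (t : ℝ) : Summable (fun n : ℕ => (n : ℝ) * t ^ n / n.factorial) := by
  apply (summable_nat_add_iff 1).mp
  have : (fun n : ℕ => ((n : ℕ) + 1 : ℝ) * t ^ (n + 1) / ((n : ℕ) + 1).factorial)
      = fun n : ℕ => t * (t ^ n / n.factorial) := by
    funext n; exact keyM t n
  simp only [Nat.cast_add, Nat.cast_one]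
  rw [this]
  exact (sumB_summable t).mul_left t

lemma sumM (t : ℝ) : ∑' n : ℕ, (n : ℝ) * t ^ n / n.factorial = t * Real.exp t := by
  have h := Summable.tsum_eq_zero_add (sumM_summable t)
  simp only [Nat.cast_zero, zero_mul, zero_div, zero_add, Nat.cast_add, Nat.cast_one] at h
  rw [h]
  have : (fun n : ℕ => ((n : ℝ) + 1) * t ^ (n + 1) / ((n : ℕ) + 1).factorial)
      = fun n : ℕ => t * (t ^ n / n.factorial) := by
    funext n; exact keyM t n
  rw [this, tsum_mul_left, sumB]

/-! ### Pointwise squared norms of the displaced Fock states -/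

lemma exp_half_sq (t : ℝ) : Real.exp (-t / 2) * Real.exp (-t / 2) = Real.exp (-t) := by
  rw [← Real.exp_add]; ring_nf

lemma arg_eq (α : ℂ) :
    Complex.exp (-(‖α‖ ^ 2 : ℝ) / 2) = ((Real.exp (-(‖α‖ ^ 2) / 2) : ℝ) : ℂ) := by
  rw [Complex.ofReal_exp]; push_cast; ring_nf

lemma norm_psi0_sq (α : ℂ) (n : ℕ) :
    ‖psi0 α n‖ ^ 2 = Real.exp (-(‖α‖ ^ 2)) * ((‖α‖ ^ 2) ^ n / n.factorial) := by
  have hfac : (0:ℝ) ≤ (n.factorial : ℝ) := Nat.cast_nonneg _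
  simp only [psi0, arg_eq, norm_div, norm_mul, Complex.norm_real,
    norm_pow, Real.norm_eq_abs, abs_of_nonneg (Real.exp_nonneg _),
    abs_of_nonneg (Real.sqrt_nonneg _)]
  rw [div_pow, mul_pow, Real.sq_sqrt hfac, sq (Real.exp _), exp_half_sq,
    show (‖α‖ ^ n) ^ 2 = (‖α‖ ^ 2) ^ n by rw [← pow_mul, ← pow_mul, mul_comm]]
  ring

lemma norm_psi1_sq_zero (α : ℂ) :
    ‖psi1 α 0‖ ^ 2 = Real.exp (-(‖α‖ ^ 2)) * (‖α‖ ^ 2) := by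
  simp only [psi1, if_pos rfl, if_true, arg_eq, norm_mul, norm_neg,
    Complex.norm_real, Real.norm_eq_abs, abs_of_nonneg (Real.exp_nonneg _),
    RCLike.norm_conj]
  rw [mul_pow, sq (Real.exp _), exp_half_sq]
  ring

lemma norm_psi1_sq_succ (α : ℂ) (m : ℕ) :
    ‖psi1 α (m + 1)‖ ^ 2 =
      Real.exp (-(‖α‖ ^ 2)) *
        ((‖α‖ ^ 2) ^ m * (((m : ℝ) + 1) - ‖α‖ ^ 2) ^ 2 / (m + 1).factorial) := by
  set t : ℝ := ‖α‖ ^ 2 with ht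
  have hfac : (0:ℝ) ≤ ((m + 1).factorial : ℝ) := Nat.cast_nonneg _
  have hcast : ((m + 1 : ℕ) : ℂ) - ((t : ℝ) : ℂ) = (((m : ℝ) + 1 - t : ℝ) : ℂ) := by
    push_cast; ring
  simp only [psi1, if_neg (Nat.succ_ne_zero m), Nat.add_sub_cancel, arg_eq,
    hcast, norm_div, norm_mul, Complex.norm_real, norm_pow, Real.norm_eq_abs,
    abs_of_nonneg (Real.exp_nonneg _), abs_of_nonneg (Real.sqrt_nonneg _)]
  have hcast' : ((m + 1 : ℕ) : ℂ) - ((‖α‖ ^ 2 : ℝ) : ℂ) = (((m : ℝ) + 1 - ‖α‖ ^ 2 : ℝ) : ℂ) := by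
    push_cast; ring
  rw [hcast', Complex.norm_real, Real.norm_eq_abs]
  rw [div_pow, mul_pow, mul_pow, Real.sq_sqrt hfac, sq_abs,
    sq (Real.exp _), exp_half_sq,
    show (‖α‖ ^ m) ^ 2 = (‖α‖ ^ 2) ^ m by rw [← pow_mul, ← pow_mul, mul_comm]]
  ring

/-! ### Summed squared norms -/

lemma psi0_sq_summable (α : ℂ) : Summable (fun n => ‖psi0 α n‖ ^ 2) := by
  have : (fun n => ‖psi0 α n‖ ^ 2)
      = fun n => Real.exp (-(‖α‖ ^ 2)) * ((‖α‖ ^ 2) ^ n / n.factorial) := by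
    funext n; exact norm_psi0_sq α n
  rw [this]
  exact (sumB_summable _).mul_left _

lemma psi0_sq_sum (α : ℂ) : ∑' n, ‖psi0 α n‖ ^ 2 = 1 := by
  have : (fun n => ‖psi0 α n‖ ^ 2)
      = fun n => Real.exp (-(‖α‖ ^ 2)) * ((‖α‖ ^ 2) ^ n / n.factorial) := by
    funext n; exact norm_psi0_sq α n
  rw [this, tsum_mul_left, sumB, ← Real.exp_add]
  simp

lemma w_eq (t : ℝ) (m : ℕ) :
    t ^ m * (((m : ℝ) + 1) - t) ^ 2 / (m + 1).factorial
      = ((m : ℝ) * t ^ m / m.factorial + t ^ m / m.factorial)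
        - 2 * t * (t ^ m / m.factorial) + t * (t ^ (m + 1) / (m + 1).factorial) := by
  have h1 : (m.factorial : ℝ) ≠ 0 := Nat.cast_ne_zero.mpr m.factorial_ne_zero
  have h2 : ((m : ℝ) + 1) ≠ 0 := by positivity
  rw [Nat.factorial_succ]
  push_cast
  field_simp
  ring

lemma psi1_succ_summable (α : ℂ) : Summable (fun m => ‖psi1 α (m + 1)‖ ^ 2) := by
  set t : ℝ := ‖α‖ ^ 2 with ht
  have hfun : (fun m => ‖psi1 α (m + 1)‖ ^ 2)
      = fun m : ℕ => Real.exp (-t) *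
          (((m : ℝ) * t ^ m / m.factorial + t ^ m / m.factorial)
            - 2 * t * (t ^ m / m.factorial) + t * (t ^ (m + 1) / (m + 1).factorial)) := by
    funext m; rw [norm_psi1_sq_succ α m, ← w_eq]
  rw [hfun]
  apply Summable.mul_left
  exact (((sumM_summable t).add (sumB_summable t)).sub
    (((sumB_summable t).mul_left (2 * t)))).add ((sumShift_summable t).mul_left t)

lemma psi1_succ_sum (α : ℂ) :
    ∑' m, ‖psi1 α (m + 1)‖ ^ 2 = Real.exp (-(‖α‖ ^ 2)) * (Real.exp (‖α‖ ^ 2) - ‖α‖ ^ 2) := by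
  set t : ℝ := ‖α‖ ^ 2 with ht
  have hfun : (fun m => ‖psi1 α (m + 1)‖ ^ 2)
      = fun m : ℕ => Real.exp (-t) *
          (((m : ℝ) * t ^ m / m.factorial + t ^ m / m.factorial)
            - 2 * t * (t ^ m / m.factorial) + t * (t ^ (m + 1) / (m + 1).factorial)) := by
    funext m; rw [norm_psi1_sq_succ α m, ← w_eq]
  rw [hfun, tsum_mul_left]
  congr 1
  have hA := (sumM_summable t).add (sumB_summable t)
  have hB := (sumB_summable t).mul_left (2 * t)
  have hC := (sumShift_summable t).mul_left t
  rw [Summable.tsum_add (hA.sub hB) hC, Summable.tsum_sub hA hB, Summable.tsum_add (sumM_summable t) (sumB_summable t)]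
  rw [sumM, sumB, tsum_mul_left, sumB, tsum_mul_left, sumShift]
  ring

lemma psi1_sq_summable (α : ℂ) : Summable (fun n => ‖psi1 α n‖ ^ 2) :=
  (summable_nat_add_iff 1).mp (psi1_succ_summable α)

lemma psi1_sq_sum (α : ℂ) : ∑' n, ‖psi1 α n‖ ^ 2 = 1 := by
  rw [Summable.tsum_eq_zero_add (psi1_sq_summable α), norm_psi1_sq_zero, psi1_succ_sum]
  have h1 : Real.exp (-(‖α‖ ^ 2)) * Real.exp (‖α‖ ^ 2) = 1 := by
    rw [← Real.exp_add]; simp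
  linear_combination h1

/-! ### Orthogonality of `ψ0` and `ψ1` -/

lemma cancel_helper (x y u : ℂ) (hx : x ≠ 0) : x * (u / (x * y)) = u / y := by
  rw [mul_div_assoc']
  exact mul_div_mul_left u y hx

lemma conj_mul_self (α : ℂ) : α * conj α = ((‖α‖ ^ 2 : ℝ) : ℂ) := by
  rw [Complex.mul_conj, Complex.normSq_eq_norm_sq]

lemma inner_term_zero (α : ℂ) :
    conj (psi0 α 0) * psi1 α 0 = -conj α * ((Real.exp (-(‖α‖ ^ 2)) : ℝ) : ℂ) := by
  simp only [psi0, psi1, if_pos rfl, if_true, arg_eq, pow_zero, Nat.factorial_zero,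
    Nat.cast_one, Real.sqrt_one, Complex.ofReal_one, mul_one, div_one, map_mul,
    Complex.conj_ofReal]
  rw [show ((Real.exp (-(‖α‖^2)/2) : ℝ) : ℂ) * (-conj α * ((Real.exp (-(‖α‖^2)/2) : ℝ) : ℂ))
      = -conj α * (((Real.exp (-(‖α‖^2)/2) * Real.exp (-(‖α‖^2)/2) : ℝ)) : ℂ) by
    push_cast; ring]
  rw [exp_half_sq]

lemma inner_term_succ (α : ℂ) (m : ℕ) :
    conj (psi0 α (m + 1)) * psi1 α (m + 1)
      = conj α * ((Real.exp (-(‖α‖ ^ 2)) *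
          ((‖α‖ ^ 2) ^ m / m.factorial - (‖α‖ ^ 2) ^ (m + 1) / (m + 1).factorial) : ℝ) : ℂ) := by
  have hsq : ((Real.sqrt ((m+1).factorial) : ℝ) : ℂ) * ((Real.sqrt ((m+1).factorial) : ℝ) : ℂ)
      = (((m+1).factorial : ℝ) : ℂ) := by
    rw [← Complex.ofReal_mul, Real.mul_self_sqrt (Nat.cast_nonneg _)]
  have hconj : (conj α) ^ (m + 1) * α ^ m = conj α * (((‖α‖ ^ 2) ^ m : ℝ) : ℂ) := by
    rw [pow_succ, mul_comm ((conj α)^m) (conj α), mul_assoc, ← mul_pow, mul_comm (conj α) α,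
      conj_mul_self]
    push_cast
    ring
  have hcast : ((m + 1 : ℕ) : ℂ) - ((‖α‖ ^ 2 : ℝ) : ℂ) = (((m : ℝ) + 1 - ‖α‖ ^ 2 : ℝ) : ℂ) := by
    push_cast; ring
  have hsqrt_ne : ((Real.sqrt ((m+1).factorial) : ℝ) : ℂ) ≠ 0 := by
    simp only [ne_eq, Complex.ofReal_eq_zero]
    exact Real.sqrt_ne_zero'.mpr (by positivity)
  have hfac_ne : (((m+1).factorial : ℝ) : ℂ) ≠ 0 := by
    simp only [ne_eq, Complex.ofReal_eq_zero, Nat.cast_ne_zero]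
    exact Nat.factorial_ne_zero _
  have hmfac_ne : ((m.factorial : ℝ) : ℂ) ≠ 0 := by
    simp only [ne_eq, Complex.ofReal_eq_zero, Nat.cast_ne_zero]
    exact Nat.factorial_ne_zero _
  simp only [psi0, psi1, if_neg (Nat.succ_ne_zero m), Nat.add_sub_cancel, arg_eq, hcast,
    map_mul, map_div₀, map_pow, Complex.conj_ofReal]
  rw [div_mul_div_comm, hsq]
  have hexp : ((Real.exp (-(‖α‖ ^ 2)/2) : ℝ) : ℂ) * ((Real.exp (-(‖α‖ ^ 2)/2) : ℝ) : ℂ)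
      = ((Real.exp (-(‖α‖ ^ 2)) : ℝ) : ℂ) := by
    rw [← Complex.ofReal_mul, exp_half_sq (‖α‖ ^ 2)]
  have hnum : ((Real.exp (-(‖α‖ ^ 2)/2) : ℝ) : ℂ) * (conj α) ^ (m + 1) *
        (((Real.exp (-(‖α‖ ^ 2)/2) : ℝ) : ℂ) * α ^ m * (((m : ℝ) + 1 - ‖α‖ ^ 2 : ℝ) : ℂ))
      = ((Real.exp (-(‖α‖ ^ 2)) : ℝ) : ℂ) * (conj α * (((‖α‖ ^ 2) ^ m : ℝ) : ℂ)) *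
        (((m : ℝ) + 1 - ‖α‖ ^ 2 : ℝ) : ℂ) := by
    rw [← hconj, ← hexp]; ring
  rw [hnum]
  have hreal : Real.exp (-(‖α‖ ^ 2)) *
        ((‖α‖ ^ 2) ^ m / m.factorial - (‖α‖ ^ 2) ^ (m + 1) / (m + 1).factorial)
      = Real.exp (-(‖α‖ ^ 2)) * (‖α‖ ^ 2) ^ m * ((m : ℝ) + 1 - ‖α‖ ^ 2) / (m + 1).factorial := by
    have hh1 : (m.factorial : ℝ) ≠ 0 := Nat.cast_ne_zero.mpr m.factorial_ne_zero
    have hh2 : ((m : ℝ) + 1) ≠ 0 := by positivity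
    rw [Nat.factorial_succ]
    push_cast
    field_simp
    ring
  rw [hreal]
  push_cast
  ring

lemma v_summable (α : ℂ) :
    Summable (fun m : ℕ => Real.exp (-(‖α‖ ^ 2)) *
      ((‖α‖ ^ 2) ^ m / m.factorial - (‖α‖ ^ 2) ^ (m + 1) / (m + 1).factorial)) :=
  ((sumB_summable _).sub (sumShift_summable _)).mul_left _

lemma inner_summable (α : ℂ) : Summable (fun n => conj (psi0 α n) * psi1 α n) := by
  apply (summable_nat_add_iff 1).mp
  have : (fun n : ℕ => conj (psi0 α (n + 1)) * psi1 α (n + 1))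
      = fun m => conj α * ((Real.exp (-(‖α‖ ^ 2)) *
          ((‖α‖ ^ 2) ^ m / m.factorial - (‖α‖ ^ 2) ^ (m + 1) / (m + 1).factorial) : ℝ) : ℂ) := by
    funext m; exact inner_term_succ α m
  rw [this]
  exact (Complex.summable_ofReal.mpr (v_summable α)).mul_left _

lemma inner_sum_zero (α : ℂ) : ∑' n, conj (psi0 α n) * psi1 α n = 0 := by
  rw [Summable.tsum_eq_zero_add (inner_summable α), inner_term_zero]
  have : (fun n : ℕ => conj (psi0 α (n + 1)) * psi1 α (n + 1))
      = fun m => conj α * ((Real.exp (-(‖α‖ ^ 2)) *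
          ((‖α‖ ^ 2) ^ m / m.factorial - (‖α‖ ^ 2) ^ (m + 1) / (m + 1).factorial) : ℝ) : ℂ) := by
    funext m; exact inner_term_succ α m
  rw [this, tsum_mul_left, ← Complex.ofReal_tsum, tsum_mul_left,
    Summable.tsum_sub (sumB_summable _) (sumShift_summable _), sumB, sumShift]
  ring_nf

/-! ### Pointwise action of the annihilation operator -/

lemma sqrt_fac_succ (n : ℕ) :
    Real.sqrt ((n + 1).factorial) = Real.sqrt (n + 1) * Real.sqrt (n.factorial) := by
  rw [Nat.factorial_succ, Nat.cast_mul, Real.sqrt_mul (Nat.cast_nonneg _)]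
  norm_num

lemma aOp_psi0 (α : ℂ) : aOp (psi0 α) = α • psi0 α := by
  funext n
  simp only [aOp, psi0, Pi.smul_apply, smul_eq_mul]
  rw [show ((n : ℕ) + 1 : ℕ).factorial = (n + 1).factorial from rfl, sqrt_fac_succ,
    Complex.ofReal_mul]
  have h1' : ((Real.sqrt ((n:ℝ) + 1) : ℝ) : ℂ) ≠ 0 := by
    simp only [ne_eq, Complex.ofReal_eq_zero]; positivity
  rw [cancel_helper _ _ _ h1', pow_succ]
  ring

lemma aOp_psi1 (α : ℂ) : aOp (psi1 α) = α • psi1 α + psi0 α := by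
  funext n
  cases n with
  | zero =>
    simp only [aOp, psi1, psi0, Pi.add_apply, Pi.smul_apply, smul_eq_mul,
      if_pos rfl, if_true, if_neg (Nat.succ_ne_zero 0), Nat.add_sub_cancel]
    norm_num [Nat.factorial]
    have hcm : α * (starRingEnd ℂ) α = ((‖α‖ : ℂ)) ^ 2 := by
      rw [conj_mul_self]; push_cast; ring
    linear_combination (Complex.exp (-((‖α‖ : ℂ)) ^ 2 / 2)) * hcm
  | succ m =>
    simp only [aOp, psi1, psi0, Pi.add_apply, Pi.smul_apply, smul_eq_mul,
      if_neg (Nat.succ_ne_zero m), if_neg (Nat.succ_ne_zero (m+1)), Nat.add_sub_cancel]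
    rw [show ((m : ℕ) + 1 + 1 : ℕ).factorial = ((m + 1) + 1).factorial from rfl,
      sqrt_fac_succ (m + 1), Complex.ofReal_mul]
    have h1' : ((Real.sqrt (((m + 1 : ℕ) : ℝ) + 1) : ℝ) : ℂ) ≠ 0 := by
      simp only [ne_eq, Complex.ofReal_eq_zero]; positivity
    rw [cancel_helper _ _ _ h1']
    have hne : ((Real.sqrt ((m+1).factorial) : ℝ) : ℂ) ≠ 0 := by
      simp only [ne_eq, Complex.ofReal_eq_zero]
      exact Real.sqrt_ne_zero'.mpr (by positivity)
    push_cast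
    rw [pow_succ]
    field_simp
    ring

/-! ### Linearity of `aOp` and eigen-identities -/

lemma aOp_smul (c : ℂ) (ψ : ℕ → ℂ) : aOp (c • ψ) = c • aOp ψ := by
  funext n; simp only [aOp, Pi.smul_apply, smul_eq_mul]; ring

lemma aOp_neg (ψ : ℕ → ℂ) : aOp (-ψ) = -aOp ψ := by
  funext n; simp only [aOp, Pi.neg_apply]; ring

lemma eigA_L (α c : ℂ) :
    A 1 (c • psi1 α, -(c • psi0 α)) = α • (c • psi1 α, -(c • psi0 α)) := by
  unfold A
  simp only [Prod.smul_mk, Prod.mk.injEq]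
  constructor
  · rw [aOp_smul, aOp_psi1]
    funext n
    simp only [Pi.add_apply, Pi.smul_apply, Pi.neg_apply, smul_eq_mul, one_mul]
    ring
  · rw [aOp_neg, aOp_smul, aOp_psi0]
    funext n
    simp only [Pi.neg_apply, Pi.smul_apply, smul_eq_mul]
    ring

lemma eigA_L' (α c : ℂ) :
    A (-1) (c • psi1 α, c • psi0 α) = α • (c • psi1 α, c • psi0 α) := by
  unfold A
  simp only [Prod.smul_mk, Prod.mk.injEq]
  constructor
  · rw [aOp_smul, aOp_psi1]
    funext n
    simp only [Pi.add_apply, Pi.smul_apply, smul_eq_mul, neg_one_mul, Pi.neg_apply]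
    ring
  · rw [aOp_smul, aOp_psi0]
    funext n
    simp only [Pi.smul_apply, smul_eq_mul]
    ring

lemma eigAT_B (α c : ℂ) :
    AT 1 (c • psi0 α, -(c • psi1 α)) = α • (c • psi0 α, -(c • psi1 α)) := by
  unfold AT
  simp only [Prod.smul_mk, Prod.mk.injEq]
  constructor
  · rw [aOp_smul, aOp_psi0]
    funext n
    simp only [Pi.smul_apply, smul_eq_mul]
    ring
  · rw [aOp_neg, aOp_smul, aOp_psi1]
    funext n
    simp only [Pi.add_apply, Pi.smul_apply, Pi.neg_apply, smul_eq_mul, one_mul]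
    ring

lemma eigAT_B' (α c : ℂ) :
    AT (-1) (c • psi0 α, c • psi1 α) = α • (c • psi0 α, c • psi1 α) := by
  unfold AT
  simp only [Prod.smul_mk, Prod.mk.injEq]
  constructor
  · rw [aOp_smul, aOp_psi0]
    funext n
    simp only [Pi.smul_apply, smul_eq_mul]
    ring
  · rw [aOp_smul, aOp_psi1]
    funext n
    simp only [Pi.add_apply, Pi.smul_apply, smul_eq_mul, neg_one_mul, Pi.neg_apply]
    ring

/-- For every `α ∈ ℂ` (with `ψ0^α, ψ1^α ∈ ℓ²`), the Bell super-coherent states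
`|α,L±⟩ = ((1/√2)·ψ1^α, ±(1/√2)·ψ0^α)` and `|α,B±⟩ = ((1/√2)·ψ0^α, ±(1/√2)·ψ1^α)`
satisfy:
(i) the eigenvalue equations `A_1|α,L−⟩ = α|α,L−⟩`, `A_{−1}|α,L+⟩ = α|α,L+⟩`,
`Aᵀ_1|α,B−⟩ = α|α,B−⟩`, `Aᵀ_{−1}|α,B+⟩ = α|α,B+⟩`;
(ii) each of the four states is a unit vector, `⟨α,L+|α,L−⟩ = 0`, `⟨α,B+|α,B−⟩ = 0`;
(iii) each of the four states has concurrence `1`. -/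
theorem bell_supercoherent_states (α : ℂ)
    (h0 : Memℓp (psi0 α) 2) (h1 : Memℓp (psi1 α) 2)
    (f0 f1 : H) (hf0 : f0 = ⟨psi0 α, h0⟩) (hf1 : f1 = ⟨psi1 α, h1⟩)
    (LP LM BP BM : H × H)
    (hLP : LP = (((Real.sqrt 2 : ℂ))⁻¹ • f1, ((Real.sqrt 2 : ℂ))⁻¹ • f0))
    (hLM : LM = (((Real.sqrt 2 : ℂ))⁻¹ • f1, -(((Real.sqrt 2 : ℂ))⁻¹ • f0)))
    (hBP : BP = (((Real.sqrt 2 : ℂ))⁻¹ • f0, ((Real.sqrt 2 : ℂ))⁻¹ • f1))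
    (hBM : BM = (((Real.sqrt 2 : ℂ))⁻¹ • f0, -(((Real.sqrt 2 : ℂ))⁻¹ • f1))) :
    (A 1 ((LM.1 : ℕ → ℂ), (LM.2 : ℕ → ℂ)) = α • ((LM.1 : ℕ → ℂ), (LM.2 : ℕ → ℂ)) ∧
      A (-1) ((LP.1 : ℕ → ℂ), (LP.2 : ℕ → ℂ)) = α • ((LP.1 : ℕ → ℂ), (LP.2 : ℕ → ℂ)) ∧
      AT 1 ((BM.1 : ℕ → ℂ), (BM.2 : ℕ → ℂ)) = α • ((BM.1 : ℕ → ℂ), (BM.2 : ℕ → ℂ)) ∧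
      AT (-1) ((BP.1 : ℕ → ℂ), (BP.2 : ℕ → ℂ)) = α • ((BP.1 : ℕ → ℂ), (BP.2 : ℕ → ℂ))) ∧
    (‖LP.1‖ ^ 2 + ‖LP.2‖ ^ 2 = 1 ∧ ‖LM.1‖ ^ 2 + ‖LM.2‖ ^ 2 = 1 ∧
      ‖BP.1‖ ^ 2 + ‖BP.2‖ ^ 2 = 1 ∧ ‖BM.1‖ ^ 2 + ‖BM.2‖ ^ 2 = 1 ∧
      pinner LP LM = 0 ∧ pinner BP BM = 0) ∧
    (concurrence LP = 1 ∧ concurrence LM = 1 ∧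
      concurrence BP = 1 ∧ concurrence BM = 1) := by
  subst hf0 hf1 hLP hLM hBP hBM
  set c : ℂ := ((Real.sqrt 2 : ℂ))⁻¹ with hc
  set g0 : H := (⟨psi0 α, h0⟩ : H) with hg0
  set g1 : H := (⟨psi1 α, h1⟩ : H) with hg1
  -- coercions to functions
  have hco0 : (g0 : ℕ → ℂ) = psi0 α := rfl
  have hco1 : (g1 : ℕ → ℂ) = psi1 α := rfl
  have hcs : ∀ (f : H), ((c • f : H) : ℕ → ℂ) = c • (f : ℕ → ℂ) := fun f => lp.coeFn_smul c f
  have hcn : ∀ (f : H), ((-f : H) : ℕ → ℂ) = -(f : ℕ → ℂ) := fun f => lp.coeFn_neg f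
  -- norms
  have hnorm : ∀ (ψ : ℕ → ℂ) (hψ : Memℓp ψ 2), (∑' n, ‖ψ n‖ ^ 2 = 1) →
      ‖(⟨ψ, hψ⟩ : H)‖ ^ 2 = 1 := by
    intro ψ hψ hsum
    have h := lp.inner_eq_tsum (𝕜 := ℂ) (⟨ψ, hψ⟩ : H) (⟨ψ, hψ⟩ : H)
    rw [inner_self_eq_norm_sq_to_K] at h
    have h2 : (∑' n, ⟪(⟨ψ, hψ⟩ : H) n, (⟨ψ, hψ⟩ : H) n⟫_ℂ)
        = ((∑' n, ‖ψ n‖ ^ 2 : ℝ) : ℂ) := by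
      rw [Complex.ofReal_tsum]
      apply tsum_congr
      intro n
      rw [RCLike.inner_apply, conj_mul_self]
    rw [h2, hsum] at h
    norm_cast at h
    have h3 : ((‖(⟨ψ, hψ⟩ : H)‖ ^ 2 : ℝ) : ℂ) = (1 : ℂ) := h
    exact_mod_cast h3
  have hn0 : ‖g0‖ ^ 2 = 1 := hnorm _ _ (psi0_sq_sum α)
  have hn1 : ‖g1‖ ^ 2 = 1 := hnorm _ _ (psi1_sq_sum α)
  -- orthogonality
  have hip : ⟪g0, g1⟫_ℂ = 0 := by
    rw [hg0, hg1, lp.inner_eq_tsum (𝕜 := ℂ)]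
    have h2 : (∑' n, ⟪(⟨psi0 α, h0⟩ : H) n, (⟨psi1 α, h1⟩ : H) n⟫_ℂ)
        = ∑' n, conj (psi0 α n) * psi1 α n := by
      apply tsum_congr; intro n; rw [RCLike.inner_apply, mul_comm]
    rw [h2, inner_sum_zero]
  have hip' : ⟪g1, g0⟫_ℂ = 0 := by
    rw [← inner_conj_symm, hip, map_zero]
  -- norm of c
  have hcnorm : ‖c‖ ^ 2 = 1 / 2 := by
    rw [hc, norm_inv, Complex.norm_real, Real.norm_eq_abs,
      abs_of_nonneg (Real.sqrt_nonneg 2), inv_pow, Real.sq_sqrt (by norm_num : (0:ℝ) ≤ 2)]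
    norm_num
  have hns0 : ‖c • g0‖ ^ 2 = 1 / 2 := by
    rw [norm_smul, mul_pow, hn0, hcnorm]; ring
  have hns1 : ‖c • g1‖ ^ 2 = 1 / 2 := by
    rw [norm_smul, mul_pow, hn1, hcnorm]; ring
  -- scaled inners vanish
  have hips : ⟪c • g0, c • g1⟫_ℂ = 0 := by
    rw [inner_smul_left, inner_smul_right, hip]; ring
  have hips' : ⟪c • g1, c • g0⟫_ℂ = 0 := by
    rw [inner_smul_left, inner_smul_right, hip']; ring
  have hns0C : ⟪c • g0, c • g0⟫_ℂ = ((1/2 : ℝ) : ℂ) := by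
    rw [inner_self_eq_norm_sq_to_K]
    norm_cast
    rw [hns0]
    rfl
  have hns1C : ⟪c • g1, c • g1⟫_ℂ = ((1/2 : ℝ) : ℂ) := by
    rw [inner_self_eq_norm_sq_to_K]
    norm_cast
    rw [hns1]
    rfl
  -- concurrence helper
  have hconc : 2 * Real.sqrt (1 / 2 * (1 / 2) - 0 ^ 2) = 1 := by
    rw [show (1 / 2 * (1 / 2) - 0 ^ 2 : ℝ) = (1/2)^2 by norm_num,
      Real.sqrt_sq (by norm_num : (0:ℝ) ≤ 1/2)]
    norm_num
  refine ⟨⟨?_, ?_, ?_, ?_⟩, ⟨?_, ?_, ?_, ?_, ?_, ?_⟩, ?_, ?_, ?_, ?_⟩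
  · show A 1 ((↑(c • g1) : ℕ → ℂ), (↑(-(c • g0)) : ℕ → ℂ)) = _
    rw [hcs, hcn, hcs, hco0, hco1]
    exact eigA_L α c
  · show A (-1) ((↑(c • g1) : ℕ → ℂ), (↑(c • g0) : ℕ → ℂ)) = _
    rw [hcs, hcs, hco0, hco1]
    exact eigA_L' α c
  · show AT 1 ((↑(c • g0) : ℕ → ℂ), (↑(-(c • g1)) : ℕ → ℂ)) = _
    rw [hcs, hcn, hcs, hco0, hco1]
    exact eigAT_B α c
  · show AT (-1) ((↑(c • g0) : ℕ → ℂ), (↑(c • g1) : ℕ → ℂ)) = _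
    rw [hcs, hcs, hco0, hco1]
    exact eigAT_B' α c
  · show ‖c • g1‖ ^ 2 + ‖c • g0‖ ^ 2 = 1
    rw [hns0, hns1]; norm_num
  · show ‖c • g1‖ ^ 2 + ‖-(c • g0)‖ ^ 2 = 1
    rw [norm_neg, hns0, hns1]; norm_num
  · show ‖c • g0‖ ^ 2 + ‖c • g1‖ ^ 2 = 1
    rw [hns0, hns1]; norm_num
  · show ‖c • g0‖ ^ 2 + ‖-(c • g1)‖ ^ 2 = 1
    rw [norm_neg, hns0, hns1]; norm_num
  · show ⟪c • g1, c • g1⟫_ℂ + ⟪c • g0, -(c • g0)⟫_ℂ = 0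
    rw [inner_neg_right, hns0C, hns1C]
    norm_num
  · show ⟪c • g0, c • g0⟫_ℂ + ⟪c • g1, -(c • g1)⟫_ℂ = 0
    rw [inner_neg_right, hns0C, hns1C]
    norm_num
  · show 2 * Real.sqrt (‖c • g1‖ ^ 2 * ‖c • g0‖ ^ 2 - ‖⟪c • g1, c • g0⟫_ℂ‖ ^ 2) = 1
    rw [hns0, hns1, hips', norm_zero]
    exact hconc
  · show 2 * Real.sqrt (‖c • g1‖ ^ 2 * ‖-(c • g0)‖ ^ 2 - ‖⟪c • g1, -(c • g0)⟫_ℂ‖ ^ 2) = 1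
    rw [norm_neg, inner_neg_right, hns0, hns1, hips', neg_zero, norm_zero]
    exact hconc
  · show 2 * Real.sqrt (‖c • g0‖ ^ 2 * ‖c • g1‖ ^ 2 - ‖⟪c • g0, c • g1⟫_ℂ‖ ^ 2) = 1
    rw [hns0, hns1, hips, norm_zero]
    exact hconc
  · show 2 * Real.sqrt (‖c • g0‖ ^ 2 * ‖-(c • g1)‖ ^ 2 - ‖⟪c • g0, -(c • g1)⟫_ℂ‖ ^ 2) = 1
    rw [norm_neg, inner_neg_right, hns0, hns1, hips, neg_zero, norm_zero]
    exact hconc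
end
end

section
/- For every θ ∈ [0,π] and φ ∈ ℝ, each of the four super-qubit reference states |0,θ,φ⟩_{L±} = (cos(θ/2)·e_0 + (sin(θ/2)e^{iφ}/√2)·e_1, ±(sin(θ/2)e^{iφ}/√2)·e_0) and |0,θ,φ⟩_{B±} = ((sin(θ/2)e^{iφ}/√2)·e_0, cos(θ/2)·e_0 ± (sin(θ/2)e^{iφ}/√2)·e_1) is a unit vector in ℓ²(ℕ,ℂ) × ℓ²(ℕ,ℂ) whose concurrence equals sin²(θ/2); in particular the concurrence is independent of φ. -/
open scoped InnerProductSpace ComplexConjugate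

noncomputable section

/-- The standard orthonormal basis vector `e_n` of `ℓ²(ℕ, ℂ)`. -/
noncomputable def e (n : ℕ) : H := lp.single 2 n (1 : ℂ)

/-- The super-qubit reference state `|0,θ,φ⟩_{L_ε}` for sign `ε = ±1`. -/
noncomputable def refL (θ φ : ℝ) (ε : ℂ) : H × H :=
  ((Real.cos (θ / 2) : ℂ) • e 0 +
      ((Real.sin (θ / 2) : ℂ) * Complex.exp (φ * Complex.I) / Real.sqrt 2) • e 1,
    (ε * ((Real.sin (θ / 2) : ℂ) * Complex.exp (φ * Complex.I) / Real.sqrt 2)) • e 0)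

/-- The super-qubit reference state `|0,θ,φ⟩_{B_ε}` for sign `ε = ±1`. -/
noncomputable def refB (θ φ : ℝ) (ε : ℂ) : H × H :=
  (((Real.sin (θ / 2) : ℂ) * Complex.exp (φ * Complex.I) / Real.sqrt 2) • e 0,
    (Real.cos (θ / 2) : ℂ) • e 0 +
      (ε * ((Real.sin (θ / 2) : ℂ) * Complex.exp (φ * Complex.I) / Real.sqrt 2)) • e 1)

lemma inner_e (m n : ℕ) : ⟪e m, e n⟫_ℂ = if m = n then 1 else 0 := by
  rw [e, lp.inner_single_left]
  rcases eq_or_ne m n with h | h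
  · subst h; simp [e, lp.single_apply]
  · rw [show (e n : ∀ _ : ℕ, ℂ) m = 0 from lp.single_apply_ne 2 n _ h]; simp [h]

lemma norm_e (n : ℕ) : ‖e n‖ = 1 := by
  rw [e, lp.norm_single (by norm_num)]; simp

lemma norm_sq_c (w : ℂ) : ‖w‖ ^ 2 = Complex.normSq w := by
  rw [Complex.sq_norm]

lemma inner_comb (x y u v : ℂ) :
    ⟪x • e 0 + y • e 1, u • e 0 + v • e 1⟫_ℂ = conj x * u + conj y * v := by
  simp [inner_add_left, inner_add_right, inner_smul_left, inner_smul_right, inner_e, norm_e]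
  ring

lemma inner_comb_single (x y u : ℂ) :
    ⟪x • e 0 + y • e 1, u • e 0⟫_ℂ = conj x * u := by
  simp [inner_add_left, inner_smul_left, inner_smul_right, inner_e, norm_e]
  ring

lemma inner_single_comb (x u v : ℂ) :
    ⟪x • e 0, u • e 0 + v • e 1⟫_ℂ = conj x * u := by
  simp [inner_add_right, inner_smul_left, inner_smul_right, inner_e, norm_e]
  ring

lemma norm_sq_comb (x y : ℂ) :
    ‖x • e 0 + y • e 1‖ ^ 2 = Complex.normSq x + Complex.normSq y := by
  rw [InnerProductSpace.norm_sq_eq_re_inner (𝕜 := ℂ), inner_comb]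
  simp [← Complex.normSq_eq_conj_mul_self]

lemma norm_sq_single0 (x : ℂ) : ‖x • e 0‖ ^ 2 = Complex.normSq x := by
  have h : x • e 0 = x • e 0 + (0 : ℂ) • e 1 := by simp
  rw [h, norm_sq_comb]; simp

/-- Each of the four super-qubit reference states `|0,θ,φ⟩_{L±}` and `|0,θ,φ⟩_{B±}`
is a unit vector whose concurrence equals `sin²(θ/2)`; in particular the concurrence
is independent of `φ`. -/
theorem superqubit_unit_and_concurrence (θ φ : ℝ) (hθ0 : 0 ≤ θ) (hθπ : θ ≤ Real.pi)
    (ε : ℂ) (hε : ε = 1 ∨ ε = -1) :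
    (‖(refL θ φ ε).1‖ ^ 2 + ‖(refL θ φ ε).2‖ ^ 2 = 1 ∧
      concurrence (refL θ φ ε) = Real.sin (θ / 2) ^ 2) ∧
    (‖(refB θ φ ε).1‖ ^ 2 + ‖(refB θ φ ε).2‖ ^ 2 = 1 ∧
      concurrence (refB θ φ ε) = Real.sin (θ / 2) ^ 2) := by
  have hε2 : Complex.normSq ε = 1 := by rcases hε with h | h <;> simp [h]
  set s := Real.sin (θ / 2)
  set c := Real.cos (θ / 2)
  have hcs : s ^ 2 + c ^ 2 = 1 := Real.sin_sq_add_cos_sq (θ / 2)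
  have hnz : Complex.normSq ((s : ℂ) * Complex.exp (φ * Complex.I) / (Real.sqrt 2 : ℝ)) =
      s ^ 2 / 2 := by
    rw [Complex.normSq_div, Complex.normSq_mul, Complex.normSq_ofReal, Complex.normSq_ofReal,
      ← Complex.sq_norm, Complex.norm_exp_ofReal_mul_I]
    rw [show Real.sqrt 2 * Real.sqrt 2 = 2 from Real.mul_self_sqrt (by norm_num)]
    ring
  -- refL facts
  have hL1 : ‖(refL θ φ ε).1‖ ^ 2 = c ^ 2 + s ^ 2 / 2 := by
    rw [show (refL θ φ ε).1 = (c : ℂ) • e 0 +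
        ((s : ℂ) * Complex.exp (φ * Complex.I) / (Real.sqrt 2 : ℝ)) • e 1 from rfl,
      norm_sq_comb, hnz, Complex.normSq_ofReal]
    ring
  have hL2 : ‖(refL θ φ ε).2‖ ^ 2 = s ^ 2 / 2 := by
    rw [show (refL θ φ ε).2 = (ε * ((s : ℂ) * Complex.exp (φ * Complex.I) /
        (Real.sqrt 2 : ℝ))) • e 0 from rfl, norm_sq_single0, Complex.normSq_mul, hε2, hnz]
    ring
  have hLi : ‖(⟪(refL θ φ ε).1, (refL θ φ ε).2⟫_ℂ : ℂ)‖ ^ 2 = c ^ 2 * (s ^ 2 / 2) := by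
    rw [show (refL θ φ ε).1 = (c : ℂ) • e 0 +
        ((s : ℂ) * Complex.exp (φ * Complex.I) / (Real.sqrt 2 : ℝ)) • e 1 from rfl,
      show (refL θ φ ε).2 = (ε * ((s : ℂ) * Complex.exp (φ * Complex.I) /
        (Real.sqrt 2 : ℝ))) • e 0 from rfl, inner_comb_single, norm_sq_c,
      Complex.normSq_mul, Complex.normSq_mul, Complex.normSq_conj, Complex.normSq_ofReal,
      hε2, hnz]
    ring
  -- refB facts
  have hB1 : ‖(refB θ φ ε).1‖ ^ 2 = s ^ 2 / 2 := by
    rw [show (refB θ φ ε).1 = ((s : ℂ) * Complex.exp (φ * Complex.I) /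
        (Real.sqrt 2 : ℝ)) • e 0 from rfl, norm_sq_single0, hnz]
  have hB2 : ‖(refB θ φ ε).2‖ ^ 2 = c ^ 2 + s ^ 2 / 2 := by
    rw [show (refB θ φ ε).2 = (c : ℂ) • e 0 + (ε * ((s : ℂ) * Complex.exp (φ * Complex.I) /
        (Real.sqrt 2 : ℝ))) • e 1 from rfl, norm_sq_comb, Complex.normSq_mul, hε2, hnz,
      Complex.normSq_ofReal]
    ring
  have hBi : ‖(⟪(refB θ φ ε).1, (refB θ φ ε).2⟫_ℂ : ℂ)‖ ^ 2 = c ^ 2 * (s ^ 2 / 2) := by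
    rw [show (refB θ φ ε).1 = ((s : ℂ) * Complex.exp (φ * Complex.I) /
        (Real.sqrt 2 : ℝ)) • e 0 from rfl,
      show (refB θ φ ε).2 = (c : ℂ) • e 0 + (ε * ((s : ℂ) * Complex.exp (φ * Complex.I) /
        (Real.sqrt 2 : ℝ))) • e 1 from rfl, inner_single_comb, norm_sq_c,
      Complex.normSq_mul, Complex.normSq_conj, Complex.normSq_ofReal, hnz]
    ring
  have hsqrt : Real.sqrt ((s ^ 2 / 2) ^ 2) = s ^ 2 / 2 := Real.sqrt_sq (by positivity)
  refine ⟨⟨by rw [hL1, hL2]; linarith, ?_⟩, ⟨by rw [hB1, hB2]; linarith, ?_⟩⟩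
  · rw [concurrence, hL1, hL2, hLi,
      show (c ^ 2 + s ^ 2 / 2) * (s ^ 2 / 2) - c ^ 2 * (s ^ 2 / 2) = (s ^ 2 / 2) ^ 2 by ring,
      hsqrt]
    ring
  · rw [concurrence, hB1, hB2, hBi,
      show s ^ 2 / 2 * (c ^ 2 + s ^ 2 / 2) - c ^ 2 * (s ^ 2 / 2) = (s ^ 2 / 2) ^ 2 by ring,
      hsqrt]
    ring
end
end

section
/- For every α ∈ ℂ, θ ∈ [0,π], φ ∈ ℝ, each of the four super-coherent states |α,θ,φ⟩_{L±} and |α,θ,φ⟩_{B±} is a unit vector in ℓ²(ℕ,ℂ) × ℓ²(ℕ,ℂ) whose concurrence equals sin²(θ/2); in particular the concurrence is independent of the displacement parameter α. -/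
open scoped InnerProductSpace ComplexConjugate

noncomputable section

/-! ### Auxiliary series lemmas -/

lemma cexp_summable (R : ℂ) : Summable fun n : ℕ => R ^ n / n.factorial :=
  NormedSpace.expSeries_div_summable R

lemma cexp_tsum (R : ℂ) : ∑' n : ℕ, R ^ n / n.factorial = Complex.exp R := by
  rw [Complex.exp_eq_exp_ℂ, NormedSpace.exp_eq_tsum_div]

lemma cexp_shift_summable (R : ℂ) : Summable fun n : ℕ => R ^ (n + 1) / (n + 1).factorial :=
  (summable_nat_add_iff 1).mpr (cexp_summable R)

lemma cexp_shift_tsum (R : ℂ) :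
    ∑' n : ℕ, R ^ (n + 1) / (n + 1).factorial = Complex.exp R - 1 := by
  have h := Summable.tsum_eq_zero_add (cexp_summable R)
  rw [cexp_tsum] at h
  simp at h
  linear_combination -h

lemma fact_cast_ne (m : ℕ) : ((m.factorial : ℂ)) ≠ 0 :=
  Nat.cast_ne_zero.mpr m.factorial_ne_zero

lemma muln_eq (R : ℂ) : (fun m : ℕ => (m : ℂ) * R ^ m / m.factorial) ∘ (· + 1)
    = fun m : ℕ => R * (R ^ m / m.factorial) := by
  funext m
  show ((m + 1 : ℕ) : ℂ) * R ^ (m + 1) / ((m + 1).factorial : ℂ) = _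
  have h1 : (((m + 1).factorial : ℕ) : ℂ) = ((m : ℂ) + 1) * m.factorial := by
    rw [Nat.factorial_succ]; push_cast; ring
  have h3 : ((m : ℂ) + 1) ≠ 0 := Nat.cast_add_one_ne_zero m
  rw [h1]
  push_cast
  field_simp [fact_cast_ne m]
  ring

lemma muln_summable (R : ℂ) : Summable fun m : ℕ => (m : ℂ) * R ^ m / m.factorial := by
  apply (summable_nat_add_iff 1).mp
  have := (cexp_summable R).mul_left R
  rw [show (fun n : ℕ => ((n + 1 : ℕ) : ℂ) * R ^ (n + 1) / (n + 1).factorial)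
      = (fun m : ℕ => (m : ℂ) * R ^ m / m.factorial) ∘ (· + 1) from rfl, muln_eq]
  exact this

lemma muln_tsum (R : ℂ) :
    ∑' m : ℕ, (m : ℂ) * R ^ m / m.factorial = R * Complex.exp R := by
  have h := Summable.tsum_eq_zero_add (muln_summable R)
  have h2 : ∑' m : ℕ, ((m + 1 : ℕ) : ℂ) * R ^ (m + 1) / (m + 1).factorial
      = R * Complex.exp R := by
    calc ∑' m : ℕ, ((m + 1 : ℕ) : ℂ) * R ^ (m + 1) / (m + 1).factorial
        = ∑' m : ℕ, R * (R ^ m / m.factorial) :=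
          tsum_congr fun m => congrFun (muln_eq R) m
      _ = R * Complex.exp R := by rw [tsum_mul_left, cexp_tsum]
  rw [h, h2]
  simp

lemma L1_eq (R : ℂ) :
    (fun m : ℕ => R ^ m * (((m + 1 : ℕ) : ℂ) - R) / (m + 1).factorial)
      = fun m : ℕ => R ^ m / m.factorial - R ^ (m + 1) / (m + 1).factorial := by
  funext m
  have h1 : (((m + 1).factorial : ℕ) : ℂ) = ((m : ℂ) + 1) * m.factorial := by
    rw [Nat.factorial_succ]; push_cast; ring
  have h3 : ((m : ℂ) + 1) ≠ 0 := Nat.cast_add_one_ne_zero m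
  rw [h1]
  push_cast
  field_simp [fact_cast_ne m]
  ring

lemma L1_summable (R : ℂ) :
    Summable fun m : ℕ => R ^ m * (((m + 1 : ℕ) : ℂ) - R) / (m + 1).factorial := by
  rw [L1_eq]
  exact (cexp_summable R).sub (cexp_shift_summable R)

lemma L1_tsum (R : ℂ) :
    ∑' m : ℕ, R ^ m * (((m + 1 : ℕ) : ℂ) - R) / (m + 1).factorial = 1 := by
  rw [L1_eq, Summable.tsum_sub (cexp_summable R) (cexp_shift_summable R), cexp_tsum, cexp_shift_tsum]
  ring

lemma L2_eq (R : ℂ) :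
    (fun m : ℕ => R ^ m * (((m + 1 : ℕ) : ℂ) - R) ^ 2 / (m + 1).factorial)
      = fun m : ℕ => ((m : ℂ) * R ^ m / m.factorial + R ^ m / m.factorial
          - 2 * R * (R ^ m / m.factorial) + R * (R ^ (m + 1) / (m + 1).factorial)) := by
  funext m
  have h1 : (((m + 1).factorial : ℕ) : ℂ) = ((m : ℂ) + 1) * m.factorial := by
    rw [Nat.factorial_succ]; push_cast; ring
  have h3 : ((m : ℂ) + 1) ≠ 0 := Nat.cast_add_one_ne_zero m
  rw [h1]
  push_cast
  field_simp [fact_cast_ne m]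
  ring

lemma L2_summable (R : ℂ) :
    Summable fun m : ℕ => R ^ m * (((m + 1 : ℕ) : ℂ) - R) ^ 2 / (m + 1).factorial := by
  rw [L2_eq]
  exact (((muln_summable R).add (cexp_summable R)).sub
      ((cexp_summable R).mul_left (2 * R))).add ((cexp_shift_summable R).mul_left R)

lemma L2_tsum (R : ℂ) :
    ∑' m : ℕ, R ^ m * (((m + 1 : ℕ) : ℂ) - R) ^ 2 / (m + 1).factorial
      = Complex.exp R - R := by
  rw [L2_eq]
  rw [Summable.tsum_add (((muln_summable R).add (cexp_summable R)).sub
        ((cexp_summable R).mul_left (2 * R))) ((cexp_shift_summable R).mul_left R),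
    Summable.tsum_sub ((muln_summable R).add (cexp_summable R)) ((cexp_summable R).mul_left (2 * R)),
    Summable.tsum_add (muln_summable R) (cexp_summable R), tsum_mul_left, tsum_mul_left,
    muln_tsum, cexp_tsum, cexp_shift_tsum]
  ring

/-! ### Pointwise identities and the three inner products -/

lemma conjE (α : ℂ) : conj (Complex.exp (-(‖α‖ ^ 2 : ℝ) / 2))
    = Complex.exp (-(‖α‖ ^ 2 : ℝ) / 2) := by
  rw [← Complex.exp_conj]
  congr 1
  simp [map_div₀, map_ofNat]

lemma hac (α : ℂ) : conj α * α = ((‖α‖ ^ 2 : ℝ) : ℂ) := by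
  rw [mul_comm, Complex.mul_conj]
  norm_cast
  rw [Complex.normSq_eq_norm_sq]

lemma sqrt_fact_ne (n : ℕ) : ((Real.sqrt n.factorial : ℝ) : ℂ) ≠ 0 := by
  have : (0 : ℝ) < Real.sqrt n.factorial :=
    Real.sqrt_pos.mpr (by exact_mod_cast n.factorial_pos)
  exact_mod_cast this.ne'

lemma sqrt_fact_mul (n : ℕ) :
    ((Real.sqrt n.factorial : ℝ) : ℂ) * ((Real.sqrt n.factorial : ℝ) : ℂ)
      = (n.factorial : ℂ) := by
  rw [← Complex.ofReal_mul, Real.mul_self_sqrt (by positivity)]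
  norm_cast

lemma p00 (α : ℂ) (n : ℕ) :
    conj (psi0 α n) * psi0 α n
      = (Complex.exp (-(‖α‖ ^ 2 : ℝ) / 2) * Complex.exp (-(‖α‖ ^ 2 : ℝ) / 2))
          * (((‖α‖ ^ 2 : ℝ) : ℂ) ^ n / n.factorial) := by
  have h3 : conj α ^ n * α ^ n = ((‖α‖ ^ 2 : ℝ) : ℂ) ^ n := by
    rw [← mul_pow, hac]
  simp only [psi0, map_div₀, map_mul, map_pow, conjE, Complex.conj_ofReal]
  rw [div_mul_div_comm, sqrt_fact_mul]
  set E := Complex.exp (-(‖α‖ ^ 2 : ℝ) / 2)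
  linear_combination (E * E / (n.factorial : ℂ)) * h3

lemma p01a (α : ℂ) :
    conj (psi0 α 0) * psi1 α 0
      = -(conj α * (Complex.exp (-(‖α‖ ^ 2 : ℝ) / 2)
          * Complex.exp (-(‖α‖ ^ 2 : ℝ) / 2))) := by
  simp only [psi0, psi1, reduceIte, pow_zero, Nat.factorial_zero, Nat.cast_one,
    Real.sqrt_one, Complex.ofReal_one, mul_one, div_one, map_mul, conjE]
  ring

lemma p01b (α : ℂ) (m : ℕ) :
    conj (psi0 α (m + 1)) * psi1 α (m + 1)
      = ((Complex.exp (-(‖α‖ ^ 2 : ℝ) / 2) * Complex.exp (-(‖α‖ ^ 2 : ℝ) / 2)) * conj α)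
          * (((‖α‖ ^ 2 : ℝ) : ℂ) ^ m * (((m + 1 : ℕ) : ℂ) - ((‖α‖ ^ 2 : ℝ) : ℂ))
              / (m + 1).factorial) := by
  have h3 : conj α ^ m * α ^ m = ((‖α‖ ^ 2 : ℝ) : ℂ) ^ m := by
    rw [← mul_pow, hac]
  simp only [psi0, psi1, if_neg (Nat.succ_ne_zero m), Nat.add_sub_cancel,
    map_div₀, map_mul, map_pow, conjE, Complex.conj_ofReal]
  rw [div_mul_div_comm, sqrt_fact_mul]
  set E := Complex.exp (-(‖α‖ ^ 2 : ℝ) / 2)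
  set C := (((m + 1 : ℕ) : ℂ) - ((‖α‖ ^ 2 : ℝ) : ℂ))
  linear_combination (E * E * conj α * C / (((m + 1).factorial : ℕ) : ℂ)) * h3

lemma p11a (α : ℂ) :
    conj (psi1 α 0) * psi1 α 0
      = (Complex.exp (-(‖α‖ ^ 2 : ℝ) / 2) * Complex.exp (-(‖α‖ ^ 2 : ℝ) / 2))
          * ((‖α‖ ^ 2 : ℝ) : ℂ) := by
  simp only [psi1, reduceIte, map_mul, map_neg, conjE, Complex.conj_conj]
  set E := Complex.exp (-(‖α‖ ^ 2 : ℝ) / 2)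
  linear_combination (E * E) * hac α

lemma p11b (α : ℂ) (m : ℕ) :
    conj (psi1 α (m + 1)) * psi1 α (m + 1)
      = (Complex.exp (-(‖α‖ ^ 2 : ℝ) / 2) * Complex.exp (-(‖α‖ ^ 2 : ℝ) / 2))
          * (((‖α‖ ^ 2 : ℝ) : ℂ) ^ m * (((m + 1 : ℕ) : ℂ) - ((‖α‖ ^ 2 : ℝ) : ℂ)) ^ 2
              / (m + 1).factorial) := by
  have h3 : conj α ^ m * α ^ m = ((‖α‖ ^ 2 : ℝ) : ℂ) ^ m := by
    rw [← mul_pow, hac]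
  simp only [psi1, if_neg (Nat.succ_ne_zero m), Nat.add_sub_cancel,
    map_div₀, map_mul, map_pow, map_sub, conjE, Complex.conj_ofReal, map_natCast]
  rw [div_mul_div_comm, sqrt_fact_mul]
  set E := Complex.exp (-(‖α‖ ^ 2 : ℝ) / 2)
  set C := (((m + 1 : ℕ) : ℂ) - ((‖α‖ ^ 2 : ℝ) : ℂ))
  linear_combination (E * E * C * C / (((m + 1).factorial : ℕ) : ℂ)) * h3

lemma EE (α : ℂ) :
    Complex.exp (-(‖α‖ ^ 2 : ℝ) / 2) * Complex.exp (-(‖α‖ ^ 2 : ℝ) / 2)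
        * Complex.exp ((‖α‖ ^ 2 : ℝ) : ℂ) = 1 := by
  rw [← Complex.exp_add, ← Complex.exp_add, ← Complex.exp_zero]
  congr 1
  ring

lemma inner00_tsum (α : ℂ) : ∑' n : ℕ, conj (psi0 α n) * psi0 α n = 1 := by
  calc ∑' n : ℕ, conj (psi0 α n) * psi0 α n
      = ∑' n : ℕ, (Complex.exp (-(‖α‖ ^ 2 : ℝ) / 2) * Complex.exp (-(‖α‖ ^ 2 : ℝ) / 2))
          * (((‖α‖ ^ 2 : ℝ) : ℂ) ^ n / n.factorial) := tsum_congr (p00 α)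
    _ = (Complex.exp (-(‖α‖ ^ 2 : ℝ) / 2) * Complex.exp (-(‖α‖ ^ 2 : ℝ) / 2))
          * Complex.exp ((‖α‖ ^ 2 : ℝ) : ℂ) := by rw [tsum_mul_left, cexp_tsum]
    _ = 1 := EE α

lemma inner01_summable (α : ℂ) : Summable fun n : ℕ => conj (psi0 α n) * psi1 α n := by
  apply (summable_nat_add_iff 1).mp
  have he : (fun n : ℕ => conj (psi0 α (n + 1)) * psi1 α (n + 1))
      = fun m : ℕ => ((Complex.exp (-(‖α‖ ^ 2 : ℝ) / 2)
          * Complex.exp (-(‖α‖ ^ 2 : ℝ) / 2)) * conj α)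
          * (((‖α‖ ^ 2 : ℝ) : ℂ) ^ m * (((m + 1 : ℕ) : ℂ) - ((‖α‖ ^ 2 : ℝ) : ℂ))
              / (m + 1).factorial) := funext (p01b α)
  rw [he]
  exact (L1_summable _).mul_left _

lemma inner01_tsum (α : ℂ) : ∑' n : ℕ, conj (psi0 α n) * psi1 α n = 0 := by
  rw [Summable.tsum_eq_zero_add (inner01_summable α)]
  have h2 : ∑' m : ℕ, conj (psi0 α (m + 1)) * psi1 α (m + 1)
      = ((Complex.exp (-(‖α‖ ^ 2 : ℝ) / 2) * Complex.exp (-(‖α‖ ^ 2 : ℝ) / 2)) * conj α) := by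
    calc ∑' m : ℕ, conj (psi0 α (m + 1)) * psi1 α (m + 1)
        = ∑' m : ℕ, ((Complex.exp (-(‖α‖ ^ 2 : ℝ) / 2)
            * Complex.exp (-(‖α‖ ^ 2 : ℝ) / 2)) * conj α)
            * (((‖α‖ ^ 2 : ℝ) : ℂ) ^ m * (((m + 1 : ℕ) : ℂ) - ((‖α‖ ^ 2 : ℝ) : ℂ))
                / (m + 1).factorial) := tsum_congr (p01b α)
      _ = _ := by rw [tsum_mul_left, L1_tsum, mul_one]
  rw [h2, p01a]
  ring

lemma inner11_summable (α : ℂ) : Summable fun n : ℕ => conj (psi1 α n) * psi1 α n := by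
  apply (summable_nat_add_iff 1).mp
  have he : (fun n : ℕ => conj (psi1 α (n + 1)) * psi1 α (n + 1))
      = fun m : ℕ => (Complex.exp (-(‖α‖ ^ 2 : ℝ) / 2) * Complex.exp (-(‖α‖ ^ 2 : ℝ) / 2))
          * (((‖α‖ ^ 2 : ℝ) : ℂ) ^ m * (((m + 1 : ℕ) : ℂ) - ((‖α‖ ^ 2 : ℝ) : ℂ)) ^ 2
              / (m + 1).factorial) := funext (p11b α)
  rw [he]
  exact (L2_summable _).mul_left _

lemma inner11_tsum (α : ℂ) : ∑' n : ℕ, conj (psi1 α n) * psi1 α n = 1 := by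
  rw [Summable.tsum_eq_zero_add (inner11_summable α)]
  have h2 : ∑' m : ℕ, conj (psi1 α (m + 1)) * psi1 α (m + 1)
      = (Complex.exp (-(‖α‖ ^ 2 : ℝ) / 2) * Complex.exp (-(‖α‖ ^ 2 : ℝ) / 2))
          * (Complex.exp ((‖α‖ ^ 2 : ℝ) : ℂ) - ((‖α‖ ^ 2 : ℝ) : ℂ)) := by
    calc ∑' m : ℕ, conj (psi1 α (m + 1)) * psi1 α (m + 1)
        = ∑' m : ℕ, (Complex.exp (-(‖α‖ ^ 2 : ℝ) / 2) * Complex.exp (-(‖α‖ ^ 2 : ℝ) / 2))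
            * (((‖α‖ ^ 2 : ℝ) : ℂ) ^ m * (((m + 1 : ℕ) : ℂ) - ((‖α‖ ^ 2 : ℝ) : ℂ)) ^ 2
                / (m + 1).factorial) := tsum_congr (p11b α)
      _ = _ := by rw [tsum_mul_left, L2_tsum]
  rw [h2, p11a]
  linear_combination EE α

/-- For every `α ∈ ℂ`, `θ ∈ [0,π]`, `φ ∈ ℝ` and sign `ε = ±1`, the super-coherent states
`|α,θ,φ⟩_{L_ε} = (cos(θ/2)·ψ0^α + (sin(θ/2)e^{iφ}/√2)·ψ1^α, ε(sin(θ/2)e^{iφ}/√2)·ψ0^α)`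
and
`|α,θ,φ⟩_{B_ε} = ((sin(θ/2)e^{iφ}/√2)·ψ0^α, cos(θ/2)·ψ0^α + ε(sin(θ/2)e^{iφ}/√2)·ψ1^α)`
are unit vectors in `H × H` whose concurrence equals `sin²(θ/2)`; in particular the
concurrence is independent of the displacement parameter `α`. -/
theorem supercoherent_unit_and_concurrence (α : ℂ) (θ φ : ℝ)
    (hθ0 : 0 ≤ θ) (hθπ : θ ≤ Real.pi) (ε : ℂ) (hε : ε = 1 ∨ ε = -1)
    (h0 : Memℓp (psi0 α) 2) (h1 : Memℓp (psi1 α) 2)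
    (f0 f1 : H) (hf0 : f0 = ⟨psi0 α, h0⟩) (hf1 : f1 = ⟨psi1 α, h1⟩)
    (ΨL ΨB : H × H)
    (hΨL : ΨL = ((Real.cos (θ / 2) : ℂ) • f0 +
        ((Real.sin (θ / 2) : ℂ) * Complex.exp (φ * Complex.I) / Real.sqrt 2) • f1,
      (ε * ((Real.sin (θ / 2) : ℂ) * Complex.exp (φ * Complex.I) / Real.sqrt 2)) • f0))
    (hΨB : ΨB = (((Real.sin (θ / 2) : ℂ) * Complex.exp (φ * Complex.I) / Real.sqrt 2) • f0,
      (Real.cos (θ / 2) : ℂ) • f0 +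
        (ε * ((Real.sin (θ / 2) : ℂ) * Complex.exp (φ * Complex.I) / Real.sqrt 2)) • f1)) :
    (‖ΨL.1‖ ^ 2 + ‖ΨL.2‖ ^ 2 = 1 ∧ concurrence ΨL = Real.sin (θ / 2) ^ 2) ∧
    (‖ΨB.1‖ ^ 2 + ‖ΨB.2‖ ^ 2 = 1 ∧ concurrence ΨB = Real.sin (θ / 2) ^ 2) := by
  -- the three basic inner products
  have i00 : ⟪f0, f0⟫_ℂ = 1 := by
    rw [hf0, lp.inner_eq_tsum]
    simp only [RCLike.inner_apply]
    rw [← inner00_tsum α]; exact tsum_congr fun n => mul_comm _ _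
  have i01 : ⟪f0, f1⟫_ℂ = 0 := by
    rw [hf0, hf1, lp.inner_eq_tsum]
    simp only [RCLike.inner_apply]
    rw [← inner01_tsum α]; exact tsum_congr fun n => mul_comm _ _
  have i11 : ⟪f1, f1⟫_ℂ = 1 := by
    rw [hf1, lp.inner_eq_tsum]
    simp only [RCLike.inner_apply]
    rw [← inner11_tsum α]; exact tsum_congr fun n => mul_comm _ _
  have i10 : ⟪f1, f0⟫_ℂ = 0 := by
    rw [← inner_conj_symm, i01, map_zero]
  -- norms of f0, f1
  have hnf0 : ‖f0‖ = 1 := by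
    have h := inner_self_eq_norm_sq (𝕜 := ℂ) f0
    rw [i00, RCLike.one_re] at h
    calc ‖f0‖ = Real.sqrt (‖f0‖ ^ 2) := (Real.sqrt_sq (norm_nonneg f0)).symm
      _ = 1 := by rw [← h, Real.sqrt_one]
  have hnf1 : ‖f1‖ = 1 := by
    have h := inner_self_eq_norm_sq (𝕜 := ℂ) f1
    rw [i11, RCLike.one_re] at h
    calc ‖f1‖ = Real.sqrt (‖f1‖ ^ 2) := (Real.sqrt_sq (norm_nonneg f1)).symm
      _ = 1 := by rw [← h, Real.sqrt_one]
  set C : ℂ := (Real.cos (θ / 2) : ℂ) with hCdef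
  set S : ℂ := (Real.sin (θ / 2) : ℂ) * Complex.exp (φ * Complex.I) / Real.sqrt 2 with hSdef
  have hnε : ‖ε‖ = 1 := by rcases hε with h | h <;> simp [h]
  have hnC : ‖C‖ ^ 2 = Real.cos (θ / 2) ^ 2 := by
    rw [hCdef, Complex.norm_real, Real.norm_eq_abs, sq_abs]
  have hnS : ‖S‖ ^ 2 = Real.sin (θ / 2) ^ 2 / 2 := by
    rw [hSdef, norm_div, norm_mul, Complex.norm_real, Complex.norm_real,
      Complex.norm_exp_ofReal_mul_I, mul_one, div_pow,
      Real.norm_eq_abs, Real.norm_eq_abs, sq_abs, sq_abs,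
      Real.sq_sqrt (by norm_num : (0:ℝ) ≤ 2)]
  have hpyth := Real.sin_sq_add_cos_sq (θ / 2)
  -- norms of the combinations
  have key1 : ‖C • f0 + S • f1‖ ^ 2 = Real.cos (θ / 2) ^ 2 + Real.sin (θ / 2) ^ 2 / 2 := by
    have hz : ⟪C • f0, S • f1⟫_ℂ = 0 := by
      simp only [inner_smul_left, inner_smul_right, i01]; ring
    rw [norm_add_sq (𝕜 := ℂ), hz, map_zero, norm_smul, norm_smul, hnf0, hnf1,
      mul_one, mul_one, mul_zero, add_zero, hnC, hnS]
  have key2 : ‖(ε * S) • f0‖ ^ 2 = Real.sin (θ / 2) ^ 2 / 2 := by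
    rw [norm_smul, hnf0, mul_one, norm_mul, hnε, one_mul, hnS]
  have key1' : ‖C • f0 + (ε * S) • f1‖ ^ 2
      = Real.cos (θ / 2) ^ 2 + Real.sin (θ / 2) ^ 2 / 2 := by
    have hz : ⟪C • f0, (ε * S) • f1⟫_ℂ = 0 := by
      simp only [inner_smul_left, inner_smul_right, i01]; ring
    rw [norm_add_sq (𝕜 := ℂ), hz, map_zero, norm_smul, norm_smul, hnf0, hnf1,
      mul_one, mul_one, mul_zero, add_zero, hnC, norm_mul, hnε, one_mul, hnS]
  have key2' : ‖S • f0‖ ^ 2 = Real.sin (θ / 2) ^ 2 / 2 := by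
    rw [norm_smul, hnf0, mul_one, hnS]
  -- inner products of the pair components
  have iL : ‖⟪C • f0 + S • f1, (ε * S) • f0⟫_ℂ‖ ^ 2
      = Real.cos (θ / 2) ^ 2 * (Real.sin (θ / 2) ^ 2 / 2) := by
    have : ⟪C • f0 + S • f1, (ε * S) • f0⟫_ℂ = conj C * (ε * S) := by
      simp only [inner_add_left, inner_smul_left, inner_smul_right, i00, i10]
      ring
    rw [this, norm_mul, RCLike.norm_conj, mul_pow, hnC, norm_mul, hnε, one_mul, hnS]
  have iB : ‖⟪S • f0, C • f0 + (ε * S) • f1⟫_ℂ‖ ^ 2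
      = Real.cos (θ / 2) ^ 2 * (Real.sin (θ / 2) ^ 2 / 2) := by
    have : ⟪S • f0, C • f0 + (ε * S) • f1⟫_ℂ = conj S * C := by
      simp only [inner_add_right, inner_smul_left, inner_smul_right, i00, i01]
      ring
    rw [this, norm_mul, RCLike.norm_conj, mul_pow, hnC, hnS]
    ring
  have hσ : (0:ℝ) ≤ Real.sin (θ / 2) ^ 2 / 2 := by positivity
  subst hΨL hΨB
  refine ⟨⟨?_, ?_⟩, ⟨?_, ?_⟩⟩
  · dsimp only
    rw [key1, key2]
    linarith
  · simp only [concurrence]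
    rw [key1, key2, iL]
    rw [show (Real.cos (θ / 2) ^ 2 + Real.sin (θ / 2) ^ 2 / 2) * (Real.sin (θ / 2) ^ 2 / 2)
        - Real.cos (θ / 2) ^ 2 * (Real.sin (θ / 2) ^ 2 / 2)
        = (Real.sin (θ / 2) ^ 2 / 2) ^ 2 by ring, Real.sqrt_sq hσ]
    ring
  · dsimp only
    rw [key2', key1']
    linarith
  · simp only [concurrence]
    rw [key2', key1', iB]
    rw [show (Real.sin (θ / 2) ^ 2 / 2) * (Real.cos (θ / 2) ^ 2 + Real.sin (θ / 2) ^ 2 / 2)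
        - Real.cos (θ / 2) ^ 2 * (Real.sin (θ / 2) ^ 2 / 2)
        = (Real.sin (θ / 2) ^ 2 / 2) ^ 2 by ring, Real.sqrt_sq hσ]
    ring
end
end
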